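/- arXiv:2203.15761 — 4 statements merged into one kernel-verified Lean document; each statement's English description precedes it below -/
import Mathlib

section
/- Let P(R) be the space of Borel probability measures on R equipped with the topology of weak convergence. The set D^free of all probability measures on R that belong to the maximum free domain of attraction is dense in P(R). -/
open MeasureTheory Filter Topology Set NNReal

/-- The cumulative distribution function of a Borel probability measure on `ℝ`:
`F(x) = μ((-∞, x])`. -/
noncomputable def distrib (μ : ProbabilityMeasure ℝ) (x : ℝ) : ℝ :=
  (μ (Set.Iic x) : ℝ≥0)

/-- The free maximum convolution of two distribution functions:
`H(x) = max {0, F(x) + G(x) - 1}`. -/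
noncomputable def freeMaxConv (F G : ℝ → ℝ) : ℝ → ℝ :=
  fun x => max 0 (F x + G x - 1)

/-- The `n`-fold free maximum convolution `F^{free ∨ n}` of a distribution function `F`
with itself (the constant function `1` is the neutral element of `freeMaxConv` on
distribution functions, so `freePow F 1 = F` pointwise for any cdf `F`). -/
noncomputable def freePow (F : ℝ → ℝ) : ℕ → ℝ → ℝ
  | 0 => fun _ => 1
  | n + 1 => freeMaxConv (freePow F n) F

/-- `μ` belongs to the maximum free domain of attraction `D^free`: there are `a n > 0`,
`b n`, and a nondegenerate limit distribution `G` such that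
`F^{free ∨ n} (a n * x + b n) → G x` at every continuity point `x` of `G`. -/
def MemFreeDomAttr (μ : ProbabilityMeasure ℝ) : Prop :=
  ∃ a b : ℕ → ℝ, (∀ n, 0 < a n) ∧
    ∃ G : ProbabilityMeasure ℝ,
      (∀ c : ℝ, (G : Measure ℝ) ≠ Measure.dirac c) ∧
      ∀ x : ℝ, ContinuousAt (distrib G) x →
        Tendsto (fun n : ℕ => freePow (distrib μ) n (a n * x + b n)) atTop (𝓝 (distrib G x))

/-!
A distribution with an exact exponential tail lies in `D^free`: if `F(t) = 1 - c e^{-t}` for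
all large `t`, then `n (1 - F (x + log (c n))) = e^{-x}`, so
`F^{free ∨ n} (x + log (c n)) = max 0 (1 - e^{-x})` as soon as `x + log (c n)` is in that range,
and the limit is the (nondegenerate) standard exponential law. Every `μ` is the weak limit of
measures of this form: push `μ` forward by `x ↦ min x M` and mix it with an exponential law
shifted to `M`, the latter with weight `p`; as `M → ∞` and `p → 0` these converge weakly to `μ`.
-/

open ProbabilityTheory unitInterval BoundedContinuousFunction

namespace MeasureTheory.ProbabilityMeasure

variable {Ω : Type*} [MeasurableSpace Ω]

noncomputable def mix (p : I) (ρ μ : ProbabilityMeasure Ω) : ProbabilityMeasure Ω :=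
  ⟨toNNReal p • (ρ : Measure Ω) + toNNReal (σ p) • (μ : Measure Ω), inferInstance⟩

lemma toMeasure_mix (p : I) (ρ μ : ProbabilityMeasure Ω) :
    (mix p ρ μ : Measure Ω) =
      toNNReal p • (ρ : Measure Ω) + toNNReal (σ p) • (μ : Measure Ω) :=
  rfl

lemma real_mix_apply (p : I) (ρ μ : ProbabilityMeasure Ω) (s : Set Ω) :
    (mix p ρ μ : Measure Ω).real s =
      p * (ρ : Measure Ω).real s + (1 - p) * (μ : Measure Ω).real s := by
  rw [toMeasure_mix, measureReal_add_apply, measureReal_nnreal_smul_apply,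
    measureReal_nnreal_smul_apply, coe_toNNReal, coe_toNNReal, coe_symm_eq]

variable [TopologicalSpace Ω] [OpensMeasurableSpace Ω]

lemma integral_mix (p : I) (ρ μ : ProbabilityMeasure Ω) (f : Ω →ᵇ ℝ) :
    ∫ ω, f ω ∂(mix p ρ μ : Measure Ω) =
      p * ∫ ω, f ω ∂(ρ : Measure Ω) + (1 - p) * ∫ ω, f ω ∂(μ : Measure Ω) := by
  rw [toMeasure_mix, integral_add_measure ((f.integrable _).smul_measure_nnreal)
    ((f.integrable _).smul_measure_nnreal), integral_smul_nnreal_measure,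
    integral_smul_nnreal_measure, NNReal.smul_def, NNReal.smul_def, smul_eq_mul, smul_eq_mul,
    coe_toNNReal, coe_toNNReal, coe_symm_eq]

lemma tendsto_mix {ι : Type*} {l : Filter ι}
    {p : ι → I} {ρ μ : ι → ProbabilityMeasure Ω} {ν : ProbabilityMeasure Ω}
    (hp : Tendsto p l (𝓝 0)) (hμ : Tendsto μ l (𝓝 ν)) :
    Tendsto (fun i ↦ mix (p i) (ρ i) (μ i)) l (𝓝 ν) := by
  rw [tendsto_iff_forall_integral_tendsto] at hμ ⊢
  intro f
  simp_rw [integral_mix]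
  have hp' : Tendsto (fun i ↦ (p i : ℝ)) l (𝓝 0) := tendsto_subtype_rng.mp hp
  have hρ : Tendsto (fun i ↦ (p i : ℝ) * ∫ ω, f ω ∂(ρ i : Measure Ω)) l (𝓝 0) := by
    refine squeeze_zero_norm (fun i ↦ ?_) (by simpa using hp'.mul_const ‖f‖)
    rw [norm_mul, Real.norm_of_nonneg (nonneg (p i))]
    exact mul_le_mul_of_nonneg_left (f.norm_integral_le_norm _) (nonneg (p i))
  simpa using hρ.add ((tendsto_const_nhds (x := (1 : ℝ)).sub hp').mul (hμ f))

end MeasureTheory.ProbabilityMeasure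

open Real

lemma distrib_eq_measureReal (μ : ProbabilityMeasure ℝ) (x : ℝ) :
    distrib μ x = (μ : Measure ℝ).real (Iic x) :=
  rfl

lemma distrib_le_one (μ : ProbabilityMeasure ℝ) (x : ℝ) : distrib μ x ≤ 1 :=
  measureReal_le_one

lemma distrib_mix (p : I) (ρ μ : ProbabilityMeasure ℝ) (x : ℝ) :
    distrib (ProbabilityMeasure.mix p ρ μ) x = p * distrib ρ x + (1 - p) * distrib μ x :=
  ProbabilityMeasure.real_mix_apply p ρ μ (Iic x)

lemma distrib_map (μ : ProbabilityMeasure ℝ) {f : ℝ → ℝ} (hf : AEMeasurable f μ)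
    (x : ℝ) :
    distrib (μ.map hf) x = (μ : Measure ℝ).real (f ⁻¹' Iic x) :=
  map_measureReal_apply_of_aemeasurable hf measurableSet_Iic

lemma freePow_apply {F : ℝ → ℝ} {x : ℝ} (hF : F x ≤ 1) (n : ℕ) :
    freePow F n x = max 0 (n * F x - (n - 1)) := by
  induction n with
  | zero => simp [freePow]
  | succ n ih =>
    simp only [freePow, freeMaxConv, ih, Nat.cast_succ]
    rcases le_total 0 (n * F x - (n - 1)) with h | h
    · rw [max_eq_right h]
      ring_nf
    · rw [max_eq_left h, max_eq_left (by linarith), max_eq_left (by nlinarith)]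

noncomputable def expProb : ProbabilityMeasure ℝ :=
  ⟨expMeasure 1, isProbabilityMeasure_expMeasure one_pos⟩

lemma distrib_expProb (x : ℝ) : distrib expProb x = max 0 (1 - exp (-x)) := by
  have := isProbabilityMeasure_expMeasure one_pos
  rw [distrib_eq_measureReal, ← ProbabilityTheory.cdf_eq_real]
  change cdf (expMeasure 1) x = _
  rw [cdf_expMeasure_eq one_pos, one_mul]
  split_ifs with hx
  · exact (max_eq_right (by simpa using exp_le_one_iff.mpr (neg_nonpos.mpr hx))).symm
  · exact (max_eq_left (by simpa using one_le_exp (by linarith : 0 ≤ -x))).symm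

lemma expProb_ne_dirac (c : ℝ) : (expProb : Measure ℝ) ≠ Measure.dirac c := by
  intro h
  have h_dirac : distrib expProb c = 1 := by
    rw [distrib_eq_measureReal, h, measureReal_def, Measure.dirac_apply_of_mem self_mem_Iic,
      ENNReal.toReal_one]
  have h_exp : distrib expProb c < 1 := by
    rw [distrib_expProb]
    exact max_lt one_pos (by linarith [exp_pos (-c)])
  exact h_exp.ne h_dirac

lemma memFreeDomAttr_of_exponential_tail {μ : ProbabilityMeasure ℝ} {c M : ℝ} (hc : 0 < c)
    (hμ : ∀ t, M ≤ t → distrib μ t = 1 - c * exp (-t)) : MemFreeDomAttr μ := by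
  refine ⟨fun _ ↦ 1, fun n ↦ log (c * n), fun _ ↦ one_pos, expProb, expProb_ne_dirac,
    fun x _ ↦ ?_⟩
  rw [distrib_expProb]
  have hcn : Tendsto (fun n : ℕ ↦ c * n) atTop atTop :=
    tendsto_natCast_atTop_atTop.const_mul_atTop hc
  refine tendsto_const_nhds.congr' ?_
  filter_upwards [hcn.eventually_gt_atTop 0,
    (tendsto_log_atTop.comp hcn).eventually_ge_atTop (M - x)] with n hcn_pos hlog
  have hn : (n : ℝ) ≠ 0 := by rintro h; simp [h] at hcn_pos
  have hF : distrib μ (1 * x + log (c * n)) = 1 - exp (-x) / n := by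
    rw [hμ _ (by simp only [Function.comp_apply] at hlog; linarith), one_mul, neg_add, exp_add,
      exp_neg (log _), exp_log hcn_pos]
    field_simp
  rw [freePow_apply (distrib_le_one μ _), hF]
  field_simp
  ring_nf

lemma tendsto_map_min {ι : Type*} {l : Filter ι} [l.IsCountablyGenerated]
    (μ : ProbabilityMeasure ℝ) {M : ι → ℝ} (hM : Tendsto M l atTop) :
    Tendsto (fun i ↦ μ.map (f := fun x ↦ min x (M i)) (by fun_prop)) l (𝓝 μ) := by
  have h := (tendstoInDistribution_of_ae_tendsto (l := l) (μ' := (μ : Measure ℝ)) (Z := id)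
    (fun i ↦ (by fun_prop : AEMeasurable (fun x ↦ min x (M i)) μ)) aemeasurable_id
    (ae_of_all _ fun x ↦ tendsto_const_nhds.congr' ?_)).tendsto
  · simp only [Measure.map_id] at h
    exact h
  · filter_upwards [hM.eventually_ge_atTop x] with i hi
    rw [min_eq_left hi, id]

noncomputable def expTailApprox (μ : ProbabilityMeasure ℝ) (p : I) (M : ℝ) :
    ProbabilityMeasure ℝ :=
  ProbabilityMeasure.mix p (expProb.map (measurable_add_const M).aemeasurable)
    (μ.map (f := fun x ↦ min x M) (by fun_prop))

lemma distrib_expTailApprox (μ : ProbabilityMeasure ℝ) (p : I) {M t : ℝ} (ht : M ≤ t) :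
    distrib (expTailApprox μ p M) t = 1 - p * exp M * exp (-t) := by
  have h_trunc : (fun x ↦ min x M) ⁻¹' Iic t = univ :=
    eq_univ_of_forall fun x ↦ (min_le_right x M).trans ht
  rw [expTailApprox, distrib_mix, distrib_map, distrib_map, h_trunc, probReal_univ,
    preimage_add_const_Iic, ← distrib_eq_measureReal, distrib_expProb,
    max_eq_right (by simpa using exp_le_one_iff.mpr (by linarith : -(t - M) ≤ 0)), neg_sub,
    exp_sub, div_eq_mul_inv, ← exp_neg]
  ring

lemma memFreeDomAttr_expTailApprox (μ : ProbabilityMeasure ℝ) {p : I} (hp : 0 < p) (M : ℝ) :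
    MemFreeDomAttr (expTailApprox μ p M) :=
  memFreeDomAttr_of_exponential_tail (M := M) (mul_pos hp (exp_pos M)) fun t ht ↦ by
    rw [distrib_expTailApprox μ p ht]

lemma tendsto_expTailApprox {ι : Type*} {l : Filter ι} [l.IsCountablyGenerated]
    (μ : ProbabilityMeasure ℝ) {p : ι → I} {M : ι → ℝ}
    (hp : Tendsto p l (𝓝 0)) (hM : Tendsto M l atTop) :
    Tendsto (fun i ↦ expTailApprox μ (p i) (M i)) l (𝓝 μ) :=
  ProbabilityMeasure.tendsto_mix hp (tendsto_map_min μ hM)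

/-- The set `D^free` of distributions on `ℝ` in the maximum free domain of attraction is
dense in the space of Borel probability measures on `ℝ` with the topology of weak
convergence. -/
theorem dense_free_domain_of_attraction :
    Dense {μ : ProbabilityMeasure ℝ | MemFreeDomAttr μ} := by
  intro μ
  let p : ℕ → I := fun k ↦ ⟨1 / (k + 1), div_mem zero_le_one (by positivity) (by simp)⟩
  have hp_pos : ∀ k, 0 < p k := fun k ↦ show (0 : ℝ) < 1 / (k + 1) by positivity
  have hp_lim : Tendsto p atTop (𝓝 0) :=
    tendsto_subtype_rng.mpr tendsto_one_div_add_atTop_nhds_zero_nat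
  exact mem_closure_of_tendsto (tendsto_expTailApprox μ hp_lim tendsto_natCast_atTop_atTop)
    (Eventually.of_forall fun k ↦ memFreeDomAttr_expTailApprox μ (hp_pos k) k)
end

section
/- Let P(R) be the space of Borel probability measures on R with the topology of weak convergence. The set M = { F in P(R) : x_F < infty } of all distributions with finite right endpoint is a set of the first Baire category (i.e., meagre) in P(R). -/
open MeasureTheory Filter Topology Set NNReal

/-- The right endpoint `x_F = sup {x : F x < 1}` of a distribution, as an extended real. -/
noncomputable def rightEndpoint (μ : ProbabilityMeasure ℝ) : EReal :=
  sSup ((fun x : ℝ => (x : EReal)) '' {x : ℝ | distrib μ x < 1})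

/-! The sets `A n = {μ | μ (-∞, n] = 1}` cover `M` (take `n` above the right endpoint). Each `A n`
is closed by the portmanteau theorem (`μ ↦ μ F` is upper semicontinuous for closed `F`), and has
empty interior: for `a ∉ (-∞, n]` and `p < 1` the mixture `p μ + (1 - p) δ_a` gives `(-∞, n]`
mass at most `p`, and it tends to `μ` as `p → 1`. -/

open scoped unitInterval

namespace MeasureTheory.ProbabilityMeasure

variable {Ω : Type*} [MeasurableSpace Ω]

noncomputable def mixture (p : I) (μ ν : ProbabilityMeasure Ω) : ProbabilityMeasure Ω :=
  ⟨unitInterval.toNNReal p • (μ : Measure Ω) + unitInterval.toNNReal (σ p) • (ν : Measure Ω),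
    inferInstance⟩

lemma toMeasure_mixture (p : I) (μ ν : ProbabilityMeasure Ω) :
    (mixture p μ ν : Measure Ω) =
      unitInterval.toNNReal p • (μ : Measure Ω) + unitInterval.toNNReal (σ p) • (ν : Measure Ω) :=
  rfl

lemma mixture_apply (p : I) (μ ν : ProbabilityMeasure Ω) (s : Set Ω) :
    mixture p μ ν s = unitInterval.toNNReal p * μ s + unitInterval.toNNReal (σ p) * ν s := by
  apply ENNReal.coe_injective
  rw [ennreal_coeFn_eq_coeFn_toMeasure, toMeasure_mixture]
  simp [ennreal_coeFn_eq_coeFn_toMeasure]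

@[simp] lemma mixture_one (μ ν : ProbabilityMeasure Ω) : mixture 1 μ ν = μ := by
  apply toMeasure_injective
  simp [toMeasure_mixture]

lemma integral_mixture (p : I) (μ ν : ProbabilityMeasure Ω) {f : Ω → ℝ}
    (hμ : Integrable f μ) (hν : Integrable f ν) :
    ∫ ω, f ω ∂(mixture p μ ν) = p * ∫ ω, f ω ∂μ + (1 - p) * ∫ ω, f ω ∂ν := by
  rw [toMeasure_mixture, integral_add_measure hμ.smul_measure_nnreal hν.smul_measure_nnreal,
    integral_smul_nnreal_measure, integral_smul_nnreal_measure]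
  rfl

lemma continuous_mixture [TopologicalSpace Ω] [OpensMeasurableSpace Ω]
    (μ ν : ProbabilityMeasure Ω) : Continuous fun p : I ↦ mixture p μ ν := by
  refine continuous_iff_forall_continuous_integral.2 fun f ↦ ?_
  simp_rw [integral_mixture _ _ _ (f.integrable _) (f.integrable _)]
  fun_prop

variable [TopologicalSpace Ω] [OpensMeasurableSpace Ω]

lemma isClosed_setOf_apply_eq_one [HasOuterApproxClosed Ω] {F : Set Ω} (hF : IsClosed F) :
    IsClosed {μ : ProbabilityMeasure Ω | μ F = 1} := by
  refine isClosed_iff_forall_filter.2 fun μ L _ hLS hLμ ↦ ?_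
  have h_ev : ∀ᶠ ν : ProbabilityMeasure Ω in L, (ν : Measure Ω) F = 1 :=
    eventually_of_mem (le_principal_iff.1 hLS) fun ν (hν : ν F = 1) ↦ by
      rw [← ennreal_coeFn_eq_coeFn_toMeasure, hν, ENNReal.coe_one]
  have h_limsup : L.limsup (fun ν : ProbabilityMeasure Ω ↦ (ν : Measure Ω) F) = 1 := by
    rw [limsup_congr h_ev, limsup_const]
  have h_le := limsup_measure_closed_le_of_tendsto (μs := fun ν ↦ ν) hLμ hF
  rw [h_limsup, ← ennreal_coeFn_eq_coeFn_toMeasure] at h_le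
  exact le_antisymm (apply_le_one μ F) (by exact_mod_cast h_le)

lemma dense_setOf_apply_lt_one {F : Set Ω} (hF : MeasurableSet F) (hF_ne : F ≠ univ) :
    Dense {μ : ProbabilityMeasure Ω | μ F < 1} := by
  obtain ⟨a, ha⟩ := (ne_univ_iff_exists_notMem F).1 hF_ne
  intro μ
  have h_tendsto : Tendsto (fun p : I ↦ mixture p μ (diracProba a)) (𝓝[<] 1) (𝓝 μ) := by
    simpa using ((continuous_mixture μ (diracProba a)).tendsto 1).mono_left nhdsWithin_le_nhds
  have : (𝓝[<] (1 : I)).NeBot := nhdsLT_neBot_of_exists_lt ⟨0, zero_lt_one⟩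
  refine mem_closure_of_tendsto h_tendsto (eventually_nhdsWithin_of_forall fun p hp ↦ ?_)
  have h_dirac : diracProba a F = 0 := by
    simp [diracProba, Measure.dirac_apply' a hF, ha]
  calc mixture p μ (diracProba a) F = unitInterval.toNNReal p * μ F := by
        simp [mixture_apply, h_dirac]
    _ ≤ unitInterval.toNNReal p := mul_le_of_le_one_right' (apply_le_one μ F)
    _ < 1 := hp

lemma isNowhereDense_setOf_apply_eq_one [HasOuterApproxClosed Ω] {F : Set Ω} (hF : IsClosed F)
    (hF_ne : F ≠ univ) : IsNowhereDense {μ : ProbabilityMeasure Ω | μ F = 1} := by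
  rw [(isClosed_setOf_apply_eq_one hF).isNowhereDense_iff, interior_eq_empty_iff_dense_compl]
  convert dense_setOf_apply_lt_one hF.measurableSet hF_ne using 1
  ext μ
  exact (apply_le_one μ F).lt_iff_ne.symm

end MeasureTheory.ProbabilityMeasure

open ProbabilityMeasure

lemma apply_Iic_eq_one_of_rightEndpoint_lt {μ : ProbabilityMeasure ℝ} {x : ℝ}
    (hx : rightEndpoint μ < x) : μ (Iic x) = 1 := by
  by_contra h_ne
  have h_lt : distrib μ x < 1 := by
    exact_mod_cast (ProbabilityMeasure.apply_le_one μ _).lt_of_ne h_ne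
  exact hx.not_ge (le_sSup ⟨x, h_lt, rfl⟩)

/-- The set `M` of distributions on `ℝ` with finite right endpoint is meagre (of the
first Baire category) in the space of Borel probability measures on `ℝ` with the topology
of weak convergence. -/
theorem meagre_finite_rightEndpoint :
    IsMeagre {μ : ProbabilityMeasure ℝ | rightEndpoint μ < ⊤} := by
  have h_cover : {μ : ProbabilityMeasure ℝ | rightEndpoint μ < ⊤} ⊆
      ⋃ n : ℕ, {μ : ProbabilityMeasure ℝ | μ (Iic (n : ℝ)) = 1} := by
    intro μ hμ
    obtain ⟨x, hx, -⟩ := EReal.exists_between_coe_real hμ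
    refine mem_iUnion.2 ⟨⌈x⌉₊, ?_⟩
    have h_le : (x : EReal) ≤ ((⌈x⌉₊ : ℝ) : EReal) := EReal.coe_le_coe_iff.2 (Nat.le_ceil x)
    exact apply_Iic_eq_one_of_rightEndpoint_lt (hx.trans_le h_le)
  have h_ne_univ (n : ℕ) : Iic (n : ℝ) ≠ univ := fun h ↦ not_bddAbove_univ (h ▸ bddAbove_Iic)
  exact (isMeagre_iUnion fun n ↦
    (isNowhereDense_setOf_apply_eq_one isClosed_Iic (h_ne_univ n)).isMeagre).mono h_cover
end

section
/- Let F be the distribution function of a Borel probability measure on R with infinite right endpoint x_F = infty, and suppose F belongs to the maximum domain of attraction D(G_0) of the Gumbel distribution. Then the integral over [0, infty) of (1 - F(z)) dz is finite. -/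
open MeasureTheory Filter Topology Set NNReal

/-- The generalized extreme value distribution function `G_γ`, with
`G_γ(x) = exp(-(1+γx)^(-1/γ))` where `1 + γx > 0` (interpreted as
`G_0(x) = exp(-e^(-x))` when `γ = 0`). -/
noncomputable def evCdf (γ : ℝ) (x : ℝ) : ℝ :=
  if γ = 0 then Real.exp (-Real.exp (-x))
  else if 0 < 1 + γ * x then Real.exp (-(1 + γ * x) ^ (-1 / γ))
  else if 0 < γ then 0 else 1

/-- `μ` belongs to the maximum domain of attraction `D(G_γ)`: there are `a n > 0` and `b n`
such that `(F (a n * x + b n)) ^ n → G_γ x` at every continuity point `x` of `G_γ`. -/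
def MemDomAttr (γ : ℝ) (μ : ProbabilityMeasure ℝ) : Prop :=
  ∃ a b : ℕ → ℝ, (∀ n, 0 < a n) ∧
    ∀ x : ℝ, ContinuousAt (evCdf γ) x →
      Tendsto (fun n : ℕ => distrib μ (a n * x + b n) ^ n) atTop (𝓝 (evCdf γ x))

/-!
Write `G` for the Gumbel distribution function. Since `F (a n * x + b n) ^ (2 * n) → G x ^ 2` and
`F (a (2 * n) * y + b (2 * n)) ^ (2 * n) → G y`, while `G x ^ 2 < G x` and `G x < G y ^ 2` once
`x + 1 ≤ y` (because `e > 2`), monotonicity of `F` gives, for all large `n`,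
`b n < b (2 * n) < b n + a n` and `a (2 * n) < 3 / 2 * a n`; and `F (b n) ^ n → e⁻¹` forces
`1 - F (b n) < 2 / n`. Along `n = 2 ^ k * N` the points `c k = b n` therefore cut the half-line
into intervals of length `O ((3 / 2) ^ k)` on which `1 - F = O (2⁻¹ ^ k)`, so the integral is
dominated by a convergent geometric series.
-/

noncomputable def gumbel (x : ℝ) : ℝ := Real.exp (-Real.exp (-x))

lemma evCdf_zero : evCdf 0 = gumbel := by
  funext x
  simp [evCdf, gumbel]

lemma continuous_gumbel : Continuous gumbel := by
  unfold gumbel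
  fun_prop

lemma gumbel_zero : gumbel 0 = Real.exp (-1) := by
  simp [gumbel]

lemma gumbel_sq_lt_self (x : ℝ) : gumbel x ^ 2 < gumbel x :=
  pow_lt_self_of_lt_one₀ (Real.exp_pos _)
    (Real.exp_lt_one_iff.2 (neg_lt_zero.2 (Real.exp_pos _))) one_lt_two

lemma gumbel_lt_gumbel_sq {x y : ℝ} (hxy : x + 1 ≤ y) : gumbel x < gumbel y ^ 2 := by
  rw [gumbel, gumbel, ← Real.exp_nat_mul, Real.exp_lt_exp]
  have hy : Real.exp (-y) ≤ Real.exp (-x) * Real.exp (-1) := by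
    rw [← Real.exp_add, Real.exp_le_exp]
    linarith
  have he : 2 * Real.exp (-1) < 1 := by
    rw [Real.exp_neg, ← div_eq_mul_inv, div_lt_one (Real.exp_pos 1)]
    linarith [Real.exp_one_gt_d9]
  have hx := Real.exp_pos (-x)
  push_cast
  nlinarith

lemma one_sub_lt_of_exp_neg_lt_pow {s t : ℝ} {n : ℕ} (hn : n ≠ 0) (ht : 0 ≤ t)
    (h : Real.exp (-s) < t ^ n) : 1 - t < s / n := by
  have hexp : Real.exp (-(s / n)) ^ n = Real.exp (-s) := by
    rw [← Real.exp_nat_mul]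
    field_simp
  rw [← hexp] at h
  linarith [lt_of_pow_lt_pow_left₀ n ht h, Real.add_one_le_exp (-(s / n))]

lemma le_pow_mul_of_two_mul_le {u : ℕ → ℝ} {r : ℝ} {N : ℕ} (hr : 0 ≤ r)
    (hu : ∀ n ≥ N, u (2 * n) ≤ r * u n) (k : ℕ) : u (2 ^ k * N) ≤ r ^ k * u N := by
  induction k with
  | zero => simp
  | succ k ih =>
    calc u (2 ^ (k + 1) * N) = u (2 * (2 ^ k * N)) := by rw [pow_succ', mul_assoc]
      _ ≤ r * u (2 ^ k * N) := hu _ (Nat.le_mul_of_pos_left N (by positivity))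
      _ ≤ r ^ (k + 1) * u N := by rw [pow_succ', mul_assoc]; gcongr

lemma distrib_mono (μ : ProbabilityMeasure ℝ) : Monotone (distrib μ) := fun _ _ hxy => by
  exact_mod_cast μ.apply_mono (Iic_subset_Iic.2 hxy)

lemma distrib_nonneg (μ : ProbabilityMeasure ℝ) (x : ℝ) : 0 ≤ distrib μ x :=
  (μ (Iic x)).coe_nonneg

lemma distrib_lt_one_of_rightEndpoint_eq_top {μ : ProbabilityMeasure ℝ}
    (hend : rightEndpoint μ = ⊤) (x : ℝ) : distrib μ x < 1 := by
  have hx : (x : EReal) < rightEndpoint μ := hend ▸ EReal.coe_lt_top x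
  obtain ⟨_, ⟨y, hy, rfl⟩, hxy⟩ := lt_sSup_iff.1 hx
  exact (distrib_mono μ (EReal.coe_le_coe_iff.1 hxy.le)).trans_lt hy

lemma memDomAttr_zero_iff (μ : ProbabilityMeasure ℝ) :
    MemDomAttr 0 μ ↔ ∃ a b : ℕ → ℝ, (∀ n, 0 < a n) ∧
      ∀ x, Tendsto (fun n : ℕ => distrib μ (a n * x + b n) ^ n) atTop (𝓝 (gumbel x)) := by
  simp only [MemDomAttr, evCdf_zero, continuous_gumbel.continuousAt, forall_const]

section Integral

variable {g : ℝ → ℝ}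

lemma setLIntegral_Ico_ofReal_le_of_antitone (hg : Antitone g) {x y : ℝ} (hxy : x ≤ y) :
    ∫⁻ z in Ico x y, ENNReal.ofReal (g z) ≤ ENNReal.ofReal (g x * (y - x)) := by
  calc ∫⁻ z in Ico x y, ENNReal.ofReal (g z)
      ≤ ∫⁻ _ in Ico x y, ENNReal.ofReal (g x) :=
        setLIntegral_mono measurable_const fun z hz => ENNReal.ofReal_le_ofReal (hg hz.1)
    _ = ENNReal.ofReal (g x * (y - x)) := by
        rw [setLIntegral_const, Real.volume_Ico, ← ENNReal.ofReal_mul' (sub_nonneg.2 hxy)]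

lemma Ici_subset_Ico_union_iUnion_Ico {c : ℕ → ℝ} (hc : Tendsto c atTop atTop) (t : ℝ) :
    Ici t ⊆ Ico t (c 0) ∪ ⋃ k, Ico (c k) (c (k + 1)) := by
  intro z hz
  by_cases hz0 : z < c 0
  · exact Or.inl ⟨hz, hz0⟩
  · obtain ⟨K, hK⟩ := (hc.eventually_gt_atTop z).exists
    have hmem := Ico_subset_biUnion_Ico K c ⟨not_lt.1 hz0, hK⟩
    simp only [mem_iUnion, exists_prop] at hmem
    obtain ⟨k, -, hk⟩ := hmem
    exact Or.inr (mem_iUnion.2 ⟨k, hk⟩)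

theorem lintegral_Ici_ofReal_lt_top_of_summable (hg : Antitone g) {c : ℕ → ℝ}
    (hc_mono : Monotone c) (hc : Tendsto c atTop atTop)
    (hsum : Summable fun k => g (c k) * (c (k + 1) - c k)) (t : ℝ) :
    ∫⁻ z in Ici t, ENNReal.ofReal (g z) < ⊤ := by
  have hhead : ∫⁻ z in Ico t (c 0), ENNReal.ofReal (g z) < ⊤ := by
    calc ∫⁻ z in Ico t (c 0), ENNReal.ofReal (g z)
        ≤ ∫⁻ _ in Ico t (c 0), ENNReal.ofReal (g t) :=
          setLIntegral_mono measurable_const fun z hz => ENNReal.ofReal_le_ofReal (hg hz.1)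
      _ < ⊤ := by
          rw [setLIntegral_const, Real.volume_Ico]
          exact ENNReal.mul_lt_top ENNReal.ofReal_lt_top ENNReal.ofReal_lt_top
  have htail : ∫⁻ z in ⋃ k, Ico (c k) (c (k + 1)), ENNReal.ofReal (g z) < ⊤ :=
    calc ∫⁻ z in ⋃ k, Ico (c k) (c (k + 1)), ENNReal.ofReal (g z)
        ≤ ∑' k, ∫⁻ z in Ico (c k) (c (k + 1)), ENNReal.ofReal (g z) := lintegral_iUnion_le _ _
      _ ≤ ∑' k, ENNReal.ofReal (g (c k) * (c (k + 1) - c k)) := ENNReal.tsum_le_tsum fun k =>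
          setLIntegral_Ico_ofReal_le_of_antitone hg (hc_mono k.le_succ)
      _ < ⊤ := hsum.tsum_ofReal_lt_top
  calc ∫⁻ z in Ici t, ENNReal.ofReal (g z)
      ≤ ∫⁻ z in Ico t (c 0) ∪ ⋃ k, Ico (c k) (c (k + 1)), ENNReal.ofReal (g z) :=
        lintegral_mono_set (Ici_subset_Ico_union_iUnion_Ico hc t)
    _ ≤ _ := lintegral_union_le _ _ _
    _ < ⊤ := ENNReal.add_lt_top.2 ⟨hhead, htail⟩

end Integral

section Norming

variable {F : ℝ → ℝ} {a b : ℕ → ℝ}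

lemma eventually_lt_of_tendsto_pow {ι : Type*} {l : Filter ι} (hF : Monotone F)
    (hF0 : ∀ x, 0 ≤ F x) {x y : ι → ℝ} {m : ι → ℕ} {α β : ℝ}
    (hx : Tendsto (fun i => F (x i) ^ m i) l (𝓝 α))
    (hy : Tendsto (fun i => F (y i) ^ m i) l (𝓝 β)) (hαβ : α < β) :
    ∀ᶠ i in l, x i < y i :=
  (hx.eventually_lt hy hαβ).mono fun _ h =>
    hF.reflect_lt (lt_of_pow_lt_pow_left₀ _ (hF0 _) h)

lemma tendsto_pow_two_mul_of_tendsto_gumbel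
    (hconv : ∀ x, Tendsto (fun n : ℕ => F (a n * x + b n) ^ n) atTop (𝓝 (gumbel x))) (x : ℝ) :
    Tendsto (fun n : ℕ => F (a n * x + b n) ^ (2 * n)) atTop (𝓝 (gumbel x ^ 2)) := by
  simpa only [pow_mul'] using (hconv x).pow 2

lemma tendsto_pow_two_mul_comp_two_mul
    (hconv : ∀ x, Tendsto (fun n : ℕ => F (a n * x + b n) ^ n) atTop (𝓝 (gumbel x))) (x : ℝ) :
    Tendsto (fun n : ℕ => F (a (2 * n) * x + b (2 * n)) ^ (2 * n)) atTop (𝓝 (gumbel x)) :=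
  (hconv x).comp (tendsto_id.const_mul_atTop' two_pos)

lemma eventually_lt_two_mul_of_gumbel_sq_lt (hF : Monotone F) (hF0 : ∀ x, 0 ≤ F x)
    (hconv : ∀ x, Tendsto (fun n : ℕ => F (a n * x + b n) ^ n) atTop (𝓝 (gumbel x)))
    {x y : ℝ} (h : gumbel x ^ 2 < gumbel y) :
    ∀ᶠ n : ℕ in atTop, a n * x + b n < a (2 * n) * y + b (2 * n) :=
  eventually_lt_of_tendsto_pow hF hF0 (tendsto_pow_two_mul_of_tendsto_gumbel hconv x)
    (tendsto_pow_two_mul_comp_two_mul hconv y) h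

lemma eventually_two_mul_lt_of_gumbel_lt_sq (hF : Monotone F) (hF0 : ∀ x, 0 ≤ F x)
    (hconv : ∀ x, Tendsto (fun n : ℕ => F (a n * x + b n) ^ n) atTop (𝓝 (gumbel x)))
    {x y : ℝ} (h : gumbel x < gumbel y ^ 2) :
    ∀ᶠ n : ℕ in atTop, a (2 * n) * x + b (2 * n) < a n * y + b n :=
  eventually_lt_of_tendsto_pow hF hF0 (tendsto_pow_two_mul_comp_two_mul hconv x)
    (tendsto_pow_two_mul_of_tendsto_gumbel hconv y) h

lemma eventually_one_sub_lt_two_div (hF0 : ∀ x, 0 ≤ F x)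
    (hconv : ∀ x, Tendsto (fun n : ℕ => F (a n * x + b n) ^ n) atTop (𝓝 (gumbel x))) :
    ∀ᶠ n : ℕ in atTop, 1 - F (b n) < 2 / n := by
  have hlim : Tendsto (fun n : ℕ => F (b n) ^ n) atTop (𝓝 (Real.exp (-1))) := by
    simpa [gumbel_zero] using hconv 0
  filter_upwards [hlim.eventually_const_lt (Real.exp_lt_exp.2 (by norm_num : (-2 : ℝ) < -1)),
    eventually_ne_atTop 0] with n hn hn0
  exact one_sub_lt_of_exp_neg_lt_pow hn0 (hF0 _) hn

lemma tendsto_atTop_of_one_sub_lt_two_div (hF : Monotone F) (hF1 : ∀ x, F x < 1)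
    (hb : ∀ᶠ n : ℕ in atTop, 1 - F (b n) < 2 / n) : Tendsto b atTop atTop := by
  refine tendsto_atTop.2 fun M => ?_
  have hsmall : ∀ᶠ n : ℕ in atTop, 2 / (n : ℝ) < 1 - F M :=
    (tendsto_const_div_atTop_nhds_zero_nat 2).eventually_lt_const (by linarith [hF1 M])
  filter_upwards [hb, hsmall] with n hn hnM
  exact (hF.reflect_lt (by linarith)).le

theorem exists_partition_summable_one_sub (hF : Monotone F) (hF0 : ∀ x, 0 ≤ F x)
    (hF1 : ∀ x, F x < 1)
    (hconv : ∀ x, Tendsto (fun n : ℕ => F (a n * x + b n) ^ n) atTop (𝓝 (gumbel x))) :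
    ∃ c : ℕ → ℝ, Monotone c ∧ Tendsto c atTop atTop ∧
      Summable fun k => (1 - F (c k)) * (c (k + 1) - c k) := by
  have hb_lt := eventually_lt_two_mul_of_gumbel_sq_lt hF hF0 hconv (gumbel_sq_lt_self 0)
  have hb_gap := eventually_two_mul_lt_of_gumbel_lt_sq hF hF0 hconv
    (gumbel_lt_gumbel_sq (by norm_num : (0 : ℝ) + 1 ≤ 1))
  have ha_lt := eventually_two_mul_lt_of_gumbel_lt_sq hF hF0 hconv
    (gumbel_lt_gumbel_sq (by norm_num : (2 : ℝ) + 1 ≤ 3))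
  have htail := eventually_one_sub_lt_two_div hF0 hconv
  obtain ⟨N, hN⟩ := eventually_atTop.1
    (hb_lt.and (hb_gap.and (ha_lt.and (htail.and (eventually_gt_atTop 0)))))
  simp only [mul_zero, zero_add, mul_one] at hN
  have hN0 : 0 < N := (hN N le_rfl).2.2.2.2
  have hNk : ∀ k, N ≤ 2 ^ k * N := fun k => Nat.le_mul_of_pos_left N (by positivity)
  have hsucc : ∀ k, 2 ^ (k + 1) * N = 2 * (2 ^ k * N) := fun k => by ring
  have hscale : ∀ k, a (2 ^ k * N) ≤ (3 / 2) ^ k * a N :=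
    le_pow_mul_of_two_mul_le (by norm_num) fun n hn => by linarith [hN n hn]
  have hgap : ∀ k, 0 ≤ b (2 ^ (k + 1) * N) - b (2 ^ k * N) ∧
      b (2 ^ (k + 1) * N) - b (2 ^ k * N) ≤ (3 / 2) ^ k * a N := fun k => by
    rw [hsucc]
    constructor <;> linarith [hN _ (hNk k), hscale k]
  have hterm : ∀ k, (1 - F (b (2 ^ k * N))) * (b (2 ^ (k + 1) * N) - b (2 ^ k * N)) ≤
      2 * a N / N * (3 / 4) ^ k := fun k =>
    calc _ ≤ 2 / ((2 ^ k * N : ℕ) : ℝ) * ((3 / 2) ^ k * a N) :=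
          mul_le_mul (hN _ (hNk k)).2.2.2.1.le (hgap k).2 (hgap k).1 (by positivity)
      _ = 2 * a N / N * (3 / 4) ^ k := by
          rw [show (3 / 4 : ℝ) ^ k = (3 / 2) ^ k / 2 ^ k by rw [← div_pow]; norm_num]
          push_cast
          field_simp
  refine ⟨fun k => b (2 ^ k * N), monotone_nat_of_le_succ fun k => by linarith [hgap k],
    (tendsto_atTop_of_one_sub_lt_two_div hF hF1 htail).comp
      ((tendsto_pow_atTop_atTop_of_one_lt one_lt_two).atTop_mul_const' hN0),
    .of_nonneg_of_le (fun k => mul_nonneg (by linarith [hF1 (b (2 ^ k * N))]) (hgap k).1) hterm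
      ((summable_geometric_of_lt_one (by norm_num) (by norm_num)).mul_left _)⟩

end Norming

/-- If `F` has infinite right endpoint and belongs to the maximum domain of attraction of
the Gumbel distribution `G_0`, then `∫_0^∞ (1 - F z) dz < ∞`. -/
theorem gumbel_domain_integral_finite (μ : ProbabilityMeasure ℝ)
    (hend : rightEndpoint μ = ⊤) (h : MemDomAttr 0 μ) :
    ∫⁻ z in Set.Ici (0 : ℝ), ENNReal.ofReal (1 - distrib μ z) < ⊤ := by
  obtain ⟨a, b, -, hconv⟩ := (memDomAttr_zero_iff μ).1 h
  obtain ⟨c, hc_mono, hc, hsum⟩ := exists_partition_summable_one_sub (distrib_mono μ)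
    (distrib_nonneg μ) (distrib_lt_one_of_rightEndpoint_eq_top hend) hconv
  exact lintegral_Ici_ofReal_lt_top_of_summable
    (fun _ _ hxy => sub_le_sub_left (distrib_mono μ hxy) 1) hc_mono hc hsum 0
end

section
/- Fix an integer k >= 1 and let P(R^k) be the space of Borel probability measures on R^k with the topology of weak convergence. The set D(G_0^k), consisting of all probability measures on R^k that belong to the domain of attraction of the k-fold product Gumbel distribution G_star(x) = product over i from 1 to k of exp(-e^(-x_i)), is dense in P(R^k). -/
open MeasureTheory Filter Topology Set NNReal

/-- The multivariate cumulative distribution function of a Borel probability measure on `ℝ^k`: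
`F(x) = μ(∏ i, (-∞, x i])`. -/
noncomputable def mdistrib {k : ℕ} (μ : ProbabilityMeasure (Fin k → ℝ)) (x : Fin k → ℝ) : ℝ :=
  (μ (Set.Iic x) : ℝ≥0)

/-!
Truncate `μ` coordinatewise at level `m` (push it forward by `x ↦ min x m`) and mix the result,
with weight `ε`, with the product Gumbel law `G`. Above level `m` the mixture has distribution
function `1 - ε + ε G`, and since `G (x + log c) = G x ^ (1 / c)`, the normalisation `α_n = 1`,
`β_n = log (ε n)` gives `(1 - ε + ε G x ^ (1 / (ε n))) ^ n → G x`. As `m → ∞` and `ε → 0` these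
mixtures converge weakly to `μ`.
-/

open Real (exp log)
open scoped BoundedContinuousFunction

noncomputable def gumbelCDF : StieltjesFunction ℝ where
  toFun t := exp (-exp (-t))
  mono' _ _ h := by dsimp only; gcongr
  right_continuous' _ := by fun_prop

lemma tendsto_gumbelCDF_atBot : Tendsto gumbelCDF atBot (𝓝 0) :=
  Real.tendsto_exp_atBot.comp <| tendsto_neg_atTop_atBot.comp <|
    Real.tendsto_exp_atTop.comp tendsto_neg_atBot_atTop

lemma tendsto_gumbelCDF_atTop : Tendsto gumbelCDF atTop (𝓝 1) := by
  have h : Tendsto (fun t : ℝ => -exp (-t)) atTop (𝓝 0) := by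
    simpa using (Real.tendsto_exp_atBot.comp tendsto_neg_atTop_atBot).neg
  have := (Real.continuous_exp.tendsto 0).comp h
  rwa [Real.exp_zero] at this

noncomputable def gumbelMeasure : Measure ℝ := gumbelCDF.measure

instance : IsProbabilityMeasure gumbelMeasure :=
  gumbelCDF.isProbabilityMeasure tendsto_gumbelCDF_atBot tendsto_gumbelCDF_atTop

lemma gumbelMeasure_Iic (t : ℝ) : gumbelMeasure (Iic t) = ENNReal.ofReal (exp (-exp (-t))) := by
  rw [gumbelMeasure, gumbelCDF.measure_Iic tendsto_gumbelCDF_atBot, sub_zero]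
  rfl

section Product

variable (ι : Type*) [Fintype ι]

noncomputable def productGumbel : Measure (ι → ℝ) := Measure.pi fun _ => gumbelMeasure

instance : IsProbabilityMeasure (productGumbel ι) := by
  unfold productGumbel; infer_instance

variable {ι}

lemma productGumbel_Iic (y : ι → ℝ) :
    productGumbel ι (Iic y) = ENNReal.ofReal (exp (-∑ i, exp (-y i))) := by
  rw [← pi_univ_Iic, productGumbel, Measure.pi_pi, ← Finset.sum_neg_distrib, Real.exp_sum,
    ENNReal.ofReal_prod_of_nonneg fun i _ => (Real.exp_pos _).le]
  simp only [gumbelMeasure_Iic]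

end Product

lemma tendsto_nat_mul_exp_div_sub_one (a : ℝ) :
    Tendsto (fun n : ℕ => n * (exp (a / n) - 1)) atTop (𝓝 a) := by
  have hderiv : HasDerivAt (fun t => exp (a * t)) a 0 := by
    simpa using ((hasDerivAt_id (0 : ℝ)).const_mul a).exp
  have hinv : Tendsto (fun n : ℕ => (n : ℝ)⁻¹) atTop (𝓝[≠] 0) :=
    (tendsto_inv_atTop_nhdsGT_zero.comp tendsto_natCast_atTop_atTop).mono_right
      (nhdsWithin_mono _ fun _ hx => ne_of_gt hx)
  refine ((hasDerivAt_iff_tendsto_slope_zero.mp hderiv).comp hinv).congr fun n => ?_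
  simp [div_eq_mul_inv]

lemma tendsto_one_sub_add_mul_exp_pow {ε : ℝ} (hε : ε ≠ 0) (S : ℝ) :
    Tendsto (fun n : ℕ => (1 - ε + ε * exp (-S / (ε * n))) ^ n) atTop (𝓝 (exp (-S))) := by
  have h := (tendsto_nat_mul_exp_div_sub_one (-S / ε)).const_mul ε
  rw [mul_div_cancel₀ _ hε] at h
  have h' : Tendsto (fun n : ℕ => n * (ε * (exp (-S / (ε * n)) - 1))) atTop (𝓝 (-S)) :=
    h.congr fun n => by rw [div_mul_eq_div_div]; ring
  refine (Real.tendsto_one_add_pow_exp_of_tendsto h').congr fun n => ?_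
  ring

section Mixture

variable {ι : Type*}

def truncate (m : ℝ) (x : ι → ℝ) : ι → ℝ := fun i => min (x i) m

lemma continuous_truncate (m : ℝ) : Continuous (truncate (ι := ι) m) :=
  continuous_pi fun i => (continuous_apply i).min continuous_const

lemma truncate_preimage_Iic {m : ℝ} {y : ι → ℝ} (hy : ∀ i, m ≤ y i) :
    truncate m ⁻¹' Iic y = univ :=
  eq_univ_of_forall fun _ i => (min_le_right _ _).trans (hy i)

lemma tendsto_truncate [Finite ι] (x : ι → ℝ) :
    Tendsto (fun m : ℕ => truncate m x) atTop (𝓝 x) := by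
  refine tendsto_const_nhds.congr' ?_
  filter_upwards [eventually_all.mpr fun i =>
    tendsto_natCast_atTop_atTop.eventually_ge_atTop (x i)] with m hm
  exact funext fun i => (min_eq_left (hm i)).symm

variable [Fintype ι] {μ : Measure (ι → ℝ)} [IsProbabilityMeasure μ] {ε : ℝ}

noncomputable def gumbelMixture (μ : Measure (ι → ℝ)) (ε m : ℝ) : Measure (ι → ℝ) :=
  ENNReal.ofReal (1 - ε) • μ.map (truncate m) + ENNReal.ofReal ε • productGumbel ι

lemma isProbabilityMeasure_gumbelMixture (hε0 : 0 ≤ ε) (hε1 : ε ≤ 1) (m : ℝ) :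
    IsProbabilityMeasure (gumbelMixture μ ε m) := by
  have := Measure.isProbabilityMeasure_map (μ := μ) (continuous_truncate m).aemeasurable
  constructor
  simp [gumbelMixture, ← ENNReal.ofReal_add (sub_nonneg.mpr hε1) hε0]

lemma gumbelMixture_real_Iic (hε0 : 0 ≤ ε) (hε1 : ε ≤ 1) {m : ℝ} {y : ι → ℝ}
    (hy : ∀ i, m ≤ y i) :
    (gumbelMixture μ ε m).real (Iic y) = 1 - ε + ε * exp (-∑ i, exp (-y i)) := by
  have h : gumbelMixture μ ε m (Iic y) = ENNReal.ofReal (1 - ε + ε * exp (-∑ i, exp (-y i))) := by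
    rw [gumbelMixture, Measure.add_apply, Measure.smul_apply, Measure.smul_apply,
      Measure.map_apply (continuous_truncate m).measurable measurableSet_Iic,
      truncate_preimage_Iic hy, measure_univ, productGumbel_Iic, smul_eq_mul, smul_eq_mul,
      mul_one, ← ENNReal.ofReal_mul hε0, ← ENNReal.ofReal_add (sub_nonneg.mpr hε1) (by positivity)]
  rw [measureReal_def, h, ENNReal.toReal_ofReal (add_nonneg (sub_nonneg.mpr hε1) (by positivity))]

lemma integral_gumbelMixture (hε0 : 0 ≤ ε) (hε1 : ε ≤ 1) (m : ℝ) (f : (ι → ℝ) →ᵇ ℝ) :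
    ∫ x, f x ∂gumbelMixture μ ε m =
      (1 - ε) * ∫ x, f (truncate m x) ∂μ + ε * ∫ x, f x ∂productGumbel ι := by
  have := Measure.isProbabilityMeasure_map (μ := μ) (continuous_truncate m).aemeasurable
  rw [gumbelMixture,
    integral_add_measure ((f.integrable _).smul_measure ENNReal.ofReal_ne_top)
      ((f.integrable _).smul_measure ENNReal.ofReal_ne_top),
    integral_smul_measure, integral_smul_measure, ENNReal.toReal_ofReal (sub_nonneg.mpr hε1),
    ENNReal.toReal_ofReal hε0,
    integral_map (continuous_truncate m).aemeasurable f.continuous.aestronglyMeasurable,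
    smul_eq_mul, smul_eq_mul]

lemma tendsto_gumbelMixture_real_Iic_pow (hε0 : 0 < ε) (hε1 : ε ≤ 1) (m : ℝ) (x : ι → ℝ) :
    Tendsto (fun n : ℕ => (gumbelMixture μ ε m).real (Iic fun i => x i + log (ε * n)) ^ n)
      atTop (𝓝 (exp (-∑ i, exp (-x i)))) := by
  have hlog : Tendsto (fun n : ℕ => log (ε * n)) atTop atTop :=
    Real.tendsto_log_atTop.comp (tendsto_natCast_atTop_atTop.const_mul_atTop hε0)
  refine (tendsto_one_sub_add_mul_exp_pow hε0.ne' _).congr' ?_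
  filter_upwards [eventually_all.mpr fun i => hlog.eventually_ge_atTop (m - x i),
    eventually_gt_atTop 0] with n hm hn
  have hεn : 0 < ε * n := mul_pos hε0 (Nat.cast_pos.mpr hn)
  have hsum : ∑ i, exp (-(x i + log (ε * n))) = (∑ i, exp (-x i)) / (ε * n) := by
    simp only [neg_add, Real.exp_add, Real.exp_neg (log _), Real.exp_log hεn, ← div_eq_mul_inv,
      Finset.sum_div]
  rw [gumbelMixture_real_Iic hε0.le hε1 fun i => by linarith [hm i], hsum, neg_div]

end Mixture

section Approximation

variable {ι : Type*} [Fintype ι]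

lemma one_div_nat_add_one_mem_Ioc (m : ℕ) : 1 / ((m : ℝ) + 1) ∈ Ioc 0 1 :=
  ⟨Nat.one_div_pos_of_nat, div_le_one_of_le₀ (by simp) (by positivity)⟩

noncomputable def gumbelMixtureSeq (μ : ProbabilityMeasure (ι → ℝ)) (m : ℕ) :
    ProbabilityMeasure (ι → ℝ) :=
  ⟨gumbelMixture μ (1 / (m + 1)) m, isProbabilityMeasure_gumbelMixture
    (one_div_nat_add_one_mem_Ioc m).1.le (one_div_nat_add_one_mem_Ioc m).2 m⟩

lemma tendsto_gumbelMixtureSeq (μ : ProbabilityMeasure (ι → ℝ)) :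
    Tendsto (gumbelMixtureSeq μ) atTop (𝓝 μ) := by
  rw [ProbabilityMeasure.tendsto_iff_forall_integral_tendsto]
  intro f
  have hε : Tendsto (fun m : ℕ => 1 / ((m : ℝ) + 1)) atTop (𝓝 0) :=
    tendsto_one_div_add_atTop_nhds_zero_nat
  have htrunc : Tendsto (fun m : ℕ => ∫ x, f (truncate m x) ∂μ) atTop (𝓝 (∫ x, f x ∂μ)) :=
    tendsto_integral_of_dominated_convergence (fun _ => ‖f‖)
      (fun _ => (f.continuous.comp (continuous_truncate _)).aestronglyMeasurable)
      (integrable_const _) (fun _ => ae_of_all _ fun _ => f.norm_coe_le_norm _)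
      (ae_of_all _ fun x => (f.continuous.tendsto x).comp (tendsto_truncate x))
  have h := ((tendsto_const_nhds (x := (1 : ℝ)).sub hε).mul htrunc).add
    (hε.mul (tendsto_const_nhds (x := ∫ x, f x ∂productGumbel ι)))
  rw [sub_zero, one_mul, zero_mul, add_zero] at h
  exact h.congr fun m => (integral_gumbelMixture (one_div_nat_add_one_mem_Ioc m).1.le
    (one_div_nat_add_one_mem_Ioc m).2 m f).symm

end Approximation

theorem dense_product_gumbel_domain_of_attraction_general (k : ℕ) :
    Dense {μ : ProbabilityMeasure (Fin k → ℝ) |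
      ∃ α β : ℕ → Fin k → ℝ, (∀ n i, 0 < α n i) ∧
        ∀ x : Fin k → ℝ,
          Tendsto (fun n : ℕ => mdistrib μ (fun i => α n i * x i + β n i) ^ n) atTop
            (𝓝 (∏ i, Real.exp (-Real.exp (-x i))))} := by
  intro μ
  refine mem_closure_of_tendsto (tendsto_gumbelMixtureSeq μ) (Eventually.of_forall fun m => ?_)
  refine ⟨fun _ _ => 1, fun n _ => log (1 / (m + 1) * n), fun _ _ => one_pos, fun x => ?_⟩
  have h := tendsto_gumbelMixture_real_Iic_pow (μ := μ) (one_div_nat_add_one_mem_Ioc m).1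
    (one_div_nat_add_one_mem_Ioc m).2 m x
  rw [← Finset.sum_neg_distrib, Real.exp_sum] at h
  exact h.congr fun n => by simp only [one_mul]; rfl

/-- For every `k ≥ 1`, the set `D(G_0^k)` of probability measures on `ℝ^k` belonging to
the domain of attraction of the `k`-fold product Gumbel distribution
`G_⋆ x = ∏ i, exp (-exp (-x i))` is dense in the space of Borel probability measures on
`ℝ^k` with the topology of weak convergence. -/
theorem dense_product_gumbel_domain_of_attraction (k : ℕ) (hk : 1 ≤ k) :
    Dense {μ : ProbabilityMeasure (Fin k → ℝ) |
      ∃ α β : ℕ → Fin k → ℝ, (∀ n i, 0 < α n i) ∧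
        ∀ x : Fin k → ℝ,
          Tendsto (fun n : ℕ => mdistrib μ (fun i => α n i * x i + β n i) ^ n) atTop
            (𝓝 (∏ i, Real.exp (-Real.exp (-x i))))} :=
  dense_product_gumbel_domain_of_attraction_general k
end
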